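/- Let d n : ℕ with d, n ≥ 1. Let ρA : Matrix (Fin d) (Fin d) ℂ be positive definite and let μ : Fin n → ℝ with 0 < μ s for all s. Let σ½ := ρA½ ⊗ₖ Matrix.diagonal (fun s => (Real.sqrt (μ s) : ℂ)), where ρA½ is the positive semidefinite square root of ρA. Then { X : Matrix (Fin d × Fin n) (Fin d × Fin n) ℂ | X is positive semidefinite and Γ(X) is positive semidefinite } = { X | X is positive semidefinite } ∩ closure { ∑ k, ∑ l, (a l ⊗ₖ (b k)ᴴ) * σ½ * ((a k)ᴴ ⊗ₖ b l) | N : ℕ, a : Fin N → Matrix (Fin d) (Fin d) ℂ, b : Fin N → Matrix (Fin n) (Fin n) ℂ }. -/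

import Mathlib

open Matrix ComplexOrder Kronecker

/-- Partial transpose with respect to the second tensor factor. -/
def partialTranspose {d n : ℕ} (X : Matrix (Fin d × Fin n) (Fin d × Fin n) ℂ) :
    Matrix (Fin d × Fin n) (Fin d × Fin n) ℂ :=
  fun p q => X (p.1, q.2) (q.1, p.2)

/-- σ½ = ρA^{1/2} ⊗ₖ diagonal(√μ): the square root of the product density matrix. -/
noncomputable def sigmaHalf {d n : ℕ} (ρA : Matrix (Fin d) (Fin d) ℂ) (hρA : ρA.PosDef)
    (μ : Fin n → ℝ) : Matrix (Fin d × Fin n) (Fin d × Fin n) ℂ :=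
  ((hρA.posSemidef.1.eigenvectorUnitary : Matrix (Fin d) (Fin d) ℂ) *
      Matrix.diagonal ((↑) ∘ Real.sqrt ∘ hρA.posSemidef.1.eigenvalues) *
      (star hρA.posSemidef.1.eigenvectorUnitary : Matrix (Fin d) (Fin d) ℂ)) ⊗ₖ Matrix.diagonal (fun s => ((Real.sqrt (μ s) : ℝ) : ℂ))


/-!
The partial transpose sends the generator built from `a, b` to `C * σ½ * Cᴴ` with
`C = ∑ k, a k ⊗ₖ (b k)ᵀ`, so generators, and by continuity of `Γ` their closure, are PPT.
Conversely, as `σ½` is positive definite, a positive semidefinite `Γ(X)` can be written as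
`C * σ½ * Cᴴ`, and every `C` is a finite sum of Kronecker products; hence a PPT state is
already a generator, without taking the closure.
-/

section PartialTranspose

variable {d n : ℕ}

lemma partialTranspose_involutive :
    Function.Involutive (partialTranspose : Matrix (Fin d × Fin n) (Fin d × Fin n) ℂ → _) :=
  fun _ ↦ rfl

lemma partialTranspose_kronecker (A : Matrix (Fin d) (Fin d) ℂ) (B : Matrix (Fin n) (Fin n) ℂ) :
    partialTranspose (A ⊗ₖ B) = A ⊗ₖ Bᵀ :=
  rfl

lemma partialTranspose_sum {ι : Type*} (s : Finset ι)
    (f : ι → Matrix (Fin d × Fin n) (Fin d × Fin n) ℂ) :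
    partialTranspose (∑ i ∈ s, f i) = ∑ i ∈ s, partialTranspose (f i) := by
  ext p q
  simp only [partialTranspose, Matrix.sum_apply]

lemma continuous_partialTranspose :
    Continuous (partialTranspose : Matrix (Fin d × Fin n) (Fin d × Fin n) ℂ → _) :=
  continuous_pi fun p ↦ continuous_pi fun q ↦
    (continuous_apply (q.1, p.2)).comp (continuous_apply (p.1, q.2))

lemma partialTranspose_kronecker_mul_mul (a a' : Matrix (Fin d) (Fin d) ℂ)
    (b b' : Matrix (Fin n) (Fin n) ℂ) (P : Matrix (Fin d) (Fin d) ℂ)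
    {D : Matrix (Fin n) (Fin n) ℂ} (hD : Dᵀ = D) :
    partialTranspose ((a ⊗ₖ b'ᴴ) * (P ⊗ₖ D) * (a'ᴴ ⊗ₖ b)) =
      (a ⊗ₖ bᵀ) * (P ⊗ₖ D) * (a' ⊗ₖ b'ᵀ)ᴴ := by
  simp only [← mul_kronecker_mul, partialTranspose_kronecker, conjTranspose_kronecker,
    transpose_mul, hD, conjTranspose_transpose_eq_transpose_conjTranspose, Matrix.mul_assoc]

lemma partialTranspose_sum_sum_kronecker_mul_mul {ι : Type*} [Fintype ι]
    (a : ι → Matrix (Fin d) (Fin d) ℂ) (b : ι → Matrix (Fin n) (Fin n) ℂ)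
    (P : Matrix (Fin d) (Fin d) ℂ) {D : Matrix (Fin n) (Fin n) ℂ} (hD : Dᵀ = D) :
    partialTranspose (∑ k, ∑ l, (a l ⊗ₖ (b k)ᴴ) * (P ⊗ₖ D) * ((a k)ᴴ ⊗ₖ b l)) =
      (∑ k, a k ⊗ₖ (b k)ᵀ) * (P ⊗ₖ D) * (∑ k, a k ⊗ₖ (b k)ᵀ)ᴴ := by
  simp only [partialTranspose_sum, partialTranspose_kronecker_mul_mul _ _ _ _ _ hD,
    conjTranspose_sum, Finset.sum_mul, Finset.mul_sum]

end PartialTranspose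

lemma Matrix.exists_sum_kronecker_eq {R m p : Type*} [CommSemiring R] [Fintype p]
    (C : Matrix (m × p) (m × p) R) :
    ∃ (N : ℕ) (a : Fin N → Matrix m m R) (b : Fin N → Matrix p p R), ∑ k, a k ⊗ₖ b k = C := by
  classical
  let e := Fintype.equivFin (p × p)
  refine ⟨Fintype.card (p × p), fun k ↦ of fun i j ↦ C (i, (e.symm k).1) (j, (e.symm k).2),
    fun k ↦ single (e.symm k).1 (e.symm k).2 1, ?_⟩
  rw [e.symm.sum_comp (fun st : p × p ↦ (of fun i j ↦ C (i, st.1) (j, st.2)) ⊗ₖ single st.1 st.2 1)]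
  ext ⟨i, s⟩ ⟨j, t⟩
  simp [Matrix.sum_apply, single_apply, Fintype.sum_prod_type, ite_and]

open scoped MatrixOrder in
lemma Matrix.PosDef.exists_mul_mul_conjTranspose_eq {m 𝕜 : Type*} [RCLike 𝕜] [Fintype m]
    [DecidableEq m] {σ Y : Matrix m m 𝕜} (hσ : σ.PosDef) (hY : Y.PosSemidef) :
    ∃ C, C * σ * Cᴴ = Y := by
  obtain ⟨B, hBunit, rfl⟩ :=
    CStarAlgebra.isStrictlyPositive_iff_eq_mul_star_self.mp hσ.isStrictlyPositive
  obtain ⟨E, rfl⟩ := CStarAlgebra.nonneg_iff_eq_mul_star_self.mp hY.nonneg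
  have hB : IsUnit B.det := (isUnit_iff_isUnit_det B).mp hBunit
  have hBH : IsUnit Bᴴ.det := by rw [det_conjTranspose]; exact hB.star
  refine ⟨E * B⁻¹, ?_⟩
  simp only [star_eq_conjTranspose, conjTranspose_mul, conjTranspose_nonsing_inv]
  calc E * B⁻¹ * (B * Bᴴ) * (Bᴴ⁻¹ * Eᴴ) = E * (B⁻¹ * B) * (Bᴴ * Bᴴ⁻¹) * Eᴴ := by
        simp only [Matrix.mul_assoc]
    _ = E * Eᴴ := by rw [nonsing_inv_mul _ hB, mul_nonsing_inv _ hBH, Matrix.mul_one, Matrix.mul_one]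

open scoped MatrixOrder Matrix.Norms.L2Operator in
lemma Matrix.isClosed_setOf_posSemidef {m : Type*} [Fintype m] :
    IsClosed {X : Matrix m m ℂ | X.PosSemidef} := by
  classical
  simpa [nonneg_iff_posSemidef] using
    (CStarAlgebra.isClosed_nonneg : IsClosed {X : Matrix m m ℂ | 0 ≤ X})

lemma sigmaHalf_posDef {d n : ℕ} {ρA : Matrix (Fin d) (Fin d) ℂ} (hρA : ρA.PosDef) {μ : Fin n → ℝ}
    (hμ : ∀ s, 0 < μ s) : (sigmaHalf ρA hρA μ).PosDef := by
  refine PosDef.kronecker ?_ (posDef_diagonal_iff.mpr fun s ↦ ?_)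
  · rw [IsUnit.posDef_star_right_conjugate_iff Unitary.isUnit_coe, posDef_diagonal_iff]
    intro i
    simpa using hρA.eigenvalues_pos i
  · simpa using hμ s

theorem stmt_5_general {d n : ℕ}
    (ρA : Matrix (Fin d) (Fin d) ℂ) (hρA : ρA.PosDef)
    (μ : Fin n → ℝ) (hμ : ∀ s, 0 < μ s) :
    { X : Matrix (Fin d × Fin n) (Fin d × Fin n) ℂ |
        X.PosSemidef ∧ (partialTranspose X).PosSemidef } =
      { X : Matrix (Fin d × Fin n) (Fin d × Fin n) ℂ | X.PosSemidef } ∩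
      closure { X : Matrix (Fin d × Fin n) (Fin d × Fin n) ℂ |
        ∃ (N : ℕ) (a : Fin N → Matrix (Fin d) (Fin d) ℂ)
          (b : Fin N → Matrix (Fin n) (Fin n) ℂ),
          X = ∑ k, ∑ l,
            (a l ⊗ₖ (b k)ᴴ) * sigmaHalf ρA hρA μ * ((a k)ᴴ ⊗ₖ b l) } := by
  have hΓ : ∀ (N : ℕ) (a : Fin N → Matrix (Fin d) (Fin d) ℂ) (b : Fin N → Matrix (Fin n) (Fin n) ℂ),
      partialTranspose (∑ k, ∑ l, (a l ⊗ₖ (b k)ᴴ) * sigmaHalf ρA hρA μ * ((a k)ᴴ ⊗ₖ b l)) =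
        (∑ k, a k ⊗ₖ (b k)ᵀ) * sigmaHalf ρA hρA μ * (∑ k, a k ⊗ₖ (b k)ᵀ)ᴴ :=
    fun _ a b ↦ partialTranspose_sum_sum_kronecker_mul_mul a b _ (diagonal_transpose _)
  ext X
  refine ⟨fun ⟨hX, hXΓ⟩ ↦ ⟨hX, subset_closure ?_⟩, fun ⟨hX, hXcl⟩ ↦ ⟨hX, ?_⟩⟩
  · obtain ⟨C, hC⟩ := (sigmaHalf_posDef hρA hμ).exists_mul_mul_conjTranspose_eq hXΓ
    obtain ⟨N, a, b, hab⟩ := exists_sum_kronecker_eq C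
    refine ⟨N, a, fun k ↦ (b k)ᵀ, partialTranspose_involutive.injective ?_⟩
    simp only [hΓ, transpose_transpose, hab, hC]
  · refine closure_minimal ?_ (isClosed_setOf_posSemidef.preimage continuous_partialTranspose) hXcl
    rintro _ ⟨N, a, b, rfl⟩
    show (partialTranspose _).PosSemidef
    rw [hΓ]
    exact (sigmaHalf_posDef hρA hμ).posSemidef.mul_mul_conjTranspose_same _

theorem stmt_5 {d n : ℕ} (hd : 1 ≤ d) (hn : 1 ≤ n)
    (ρA : Matrix (Fin d) (Fin d) ℂ) (hρA : ρA.PosDef)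
    (μ : Fin n → ℝ) (hμ : ∀ s, 0 < μ s) :
    { X : Matrix (Fin d × Fin n) (Fin d × Fin n) ℂ |
        X.PosSemidef ∧ (partialTranspose X).PosSemidef } =
      { X : Matrix (Fin d × Fin n) (Fin d × Fin n) ℂ | X.PosSemidef } ∩
      closure { X : Matrix (Fin d × Fin n) (Fin d × Fin n) ℂ |
        ∃ (N : ℕ) (a : Fin N → Matrix (Fin d) (Fin d) ℂ)
          (b : Fin N → Matrix (Fin n) (Fin n) ℂ),
          X = ∑ k, ∑ l,
            (a l ⊗ₖ (b k)ᴴ) * sigmaHalf ρA hρA μ * ((a k)ᴴ ⊗ₖ b l) } :=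
  stmt_5_general ρA hρA μ hμ
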